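/- arXiv:1810.02743 — 5 statements merged into one kernel-verified Lean document; each statement's English description precedes it below -/
import Mathlib

section
/- Let E be a real normed vector space, let n ≥ 1 be an integer and c > 0. For 0 ≤ j ≤ n let C_j ⊆ E be a subset, and for 0 ≤ j ≤ n−1 let A_j : E → E be a continuous linear equivalence with A_j(C_j) ⊆ C_{j+1}, and let s_0, …, s_{n−1} be real numbers such that ‖A_j^{−1} w‖ ≤ s_j·‖w‖ for every w ∈ A_j(C_j) and every 0 ≤ j ≤ n−1, and such that ∏_{j=n−k}^{n−1} s_j ≤ e^{−c·k} for every 1 ≤ k ≤ n. Then for every 0 ≤ j ≤ n−1 and every v ∈ C_j one has ‖(A_{n−1} ∘ A_{n−2} ∘ ⋯ ∘ A_j)(v)‖ ≥ e^{c·(n−j)}·‖v‖. -/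
/-!
Pulling back along the chain, each `A i⁻¹` shrinks a vector of the cone `A i '' C i` by at most
the factor `s i`, so `‖v‖ ≤ (∏_{i=j}^{n-1} s i) ‖A (n-1) ⋯ A j v‖`; the hyperbolic-time bound
with `k = n - j` turns this product into `e^{-c(n-j)}`.
-/

open Finset

/-- `chainApply A j k v` is `(A (j+k-1) ∘ ⋯ ∘ A (j+1) ∘ A j) v`. -/
noncomputable def chainApply {E : Type*} [NormedAddCommGroup E] [NormedSpace ℝ E]
    (A : ℕ → E ≃L[ℝ] E) (j : ℕ) : ℕ → E → E
  | 0 => id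
  | (k + 1) => fun v => A (j + k) (chainApply A j k v)

section ConeChain

variable {E : Type*} [NormedAddCommGroup E] [NormedSpace ℝ E]
  {n : ℕ} {C : ℕ → Set E} {A : ℕ → E ≃L[ℝ] E} {s : ℕ → ℝ}

theorem chainApply_mem (hinv : ∀ i < n, A i '' C i ⊆ C (i + 1)) {j k : ℕ} (hjk : j + k ≤ n)
    {v : E} (hv : v ∈ C j) : chainApply A j k v ∈ C (j + k) := by
  induction k with
  | zero => exact hv
  | succ k ih => exact hinv (j + k) (by omega) ⟨_, ih (by omega), rfl⟩

theorem norm_le_prod_mul_norm_chainApply (hinv : ∀ i < n, A i '' C i ⊆ C (i + 1))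
    (hnorm : ∀ i < n, ∀ w ∈ A i '' C i, ‖(A i).symm w‖ ≤ s i * ‖w‖)
    {j k : ℕ} (hjk : j + k ≤ n) {v : E} (hv : v ∈ C j) (hv0 : v ≠ 0) :
    ‖v‖ ≤ (∏ i ∈ Ico j (j + k), s i) * ‖chainApply A j k v‖ := by
  induction k with
  | zero => simp [chainApply]
  | succ k ih =>
    set x := chainApply A j k v
    have hchain : ‖v‖ ≤ (∏ i ∈ Ico j (j + k), s i) * ‖x‖ := ih (by omega)
    have hstep : ‖x‖ ≤ s (j + k) * ‖A (j + k) x‖ := by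
      simpa using hnorm (j + k) (by omega) _ ⟨x, chainApply_mem hinv (by omega) hv, rfl⟩
    have hprod_pos : 0 < ∏ i ∈ Ico j (j + k), s i :=
      pos_of_mul_pos_left (lt_of_lt_of_le (norm_pos_iff.mpr hv0) hchain) (norm_nonneg x)
    calc ‖v‖ ≤ (∏ i ∈ Ico j (j + k), s i) * (s (j + k) * ‖A (j + k) x‖) :=
          hchain.trans (mul_le_mul_of_nonneg_left hstep hprod_pos.le)
      _ = (∏ i ∈ Ico j (j + (k + 1)), s i) * ‖chainApply A j (k + 1) v‖ := by
          rw [← add_assoc, prod_Ico_succ_top (Nat.le_add_right j k), mul_assoc]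
          rfl

end ConeChain

theorem expansion_at_cone_hyperbolic_time_general
    {E : Type*} [NormedAddCommGroup E] [NormedSpace ℝ E]
    (n : ℕ) (c : ℝ)
    (C : ℕ → Set E) (A : ℕ → E ≃L[ℝ] E) (s : ℕ → ℝ)
    (hinv : ∀ j < n, (A j) '' (C j) ⊆ C (j + 1))
    (hnorm : ∀ j < n, ∀ w ∈ (A j) '' (C j), ‖(A j).symm w‖ ≤ s j * ‖w‖)
    (hprod : ∀ k : ℕ, 1 ≤ k → k ≤ n →
      ∏ j ∈ Finset.Ico (n - k) n, s j ≤ Real.exp (-c * k)) :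
    ∀ j < n, ∀ v ∈ C j,
      Real.exp (c * ((n - j : ℕ) : ℝ)) * ‖v‖ ≤ ‖chainApply A j (n - j) v‖ := by
  intro j hj v hv
  rcases eq_or_ne v 0 with rfl | hv0
  · simp
  have hchain := norm_le_prod_mul_norm_chainApply hinv hnorm (le_of_eq (Nat.add_sub_cancel' hj.le))
    hv hv0
  have hhyp := hprod (n - j) (by omega) (Nat.sub_le n j)
  rw [Nat.add_sub_cancel' hj.le] at hchain
  rw [Nat.sub_sub_self hj.le, neg_mul, Real.exp_neg] at hhyp
  rw [← le_inv_mul_iff₀ (Real.exp_pos _)]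
  exact hchain.trans (mul_le_mul_of_nonneg_right hhyp (norm_nonneg _))

/-- If the linear maps `A j` carry the cones `C j` into `C (j+1)`, the inverse maps
contract by factors `s j` on the image cones, and the products
`∏_{j=n-k}^{n-1} s j ≤ e^{-ck}` for `1 ≤ k ≤ n` (i.e. `n` is a `c`-cone-hyperbolic time),
then every vector of `C j` is expanded by the composition `A (n-1) ∘ ⋯ ∘ A j`
by a factor at least `e^{c(n-j)}`. -/
theorem expansion_at_cone_hyperbolic_time
    {E : Type*} [NormedAddCommGroup E] [NormedSpace ℝ E]
    (n : ℕ) (hn : 1 ≤ n) (c : ℝ) (hc : 0 < c)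
    (C : ℕ → Set E) (A : ℕ → E ≃L[ℝ] E) (s : ℕ → ℝ)
    (hinv : ∀ j < n, (A j) '' (C j) ⊆ C (j + 1))
    (hnorm : ∀ j < n, ∀ w ∈ (A j) '' (C j), ‖(A j).symm w‖ ≤ s j * ‖w‖)
    (hprod : ∀ k : ℕ, 1 ≤ k → k ≤ n →
      ∏ j ∈ Finset.Ico (n - k) n, s j ≤ Real.exp (-c * k)) :
    ∀ j < n, ∀ v ∈ C j,
      Real.exp (c * ((n - j : ℕ) : ℝ)) * ‖v‖ ≤ ‖chainApply A j (n - j) v‖ :=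
  expansion_at_cone_hyperbolic_time_general n c C A s hinv hnorm hprod
end

section
/- Let V be a real normed vector space and let E and G′ be subspaces of V that are algebraically complementary, i.e. every v ∈ V has a unique decomposition v = u + w with u ∈ E and w ∈ G′. Let λ ∈ (0,1) and c > 0, and for each n ∈ ℕ let T_n : V → V be a linear map such that ‖T_n u‖ ≥ λ^{−n}·‖u‖ for every u ∈ E and ‖T_n w‖ ≤ e^{−cn/2}·‖w‖ for every w ∈ G′. If G is a subspace of V such that ‖T_n v‖ ≤ e^{−cn/2}·‖v‖ for every v ∈ G and every n ∈ ℕ, then G ⊆ G′. -/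
open Filter Topology

/-- Write `v ∈ G` as `u + w` with `u ∈ E`, `w ∈ G'`: then `‖u‖ ≤ ‖T i u‖ = ‖T i v - T i w‖`
is at most `b i * (‖v‖ + ‖w‖)`, which tends to `0`. -/
theorem Submodule.le_of_codisjoint_of_tendsto_zero {R V ι : Type*} [Ring R]
    [NormedAddCommGroup V] [Module R V] {l : Filter ι} [l.NeBot]
    {E G' G : Submodule R V} (hcodisj : Codisjoint E G') (T : ι → V →ₗ[R] V) {b : ι → ℝ}
    (hb : Tendsto b l (𝓝 0))
    (hE : ∀ i, ∀ u ∈ E, ‖u‖ ≤ ‖T i u‖)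
    (hG' : ∀ i, ∀ w ∈ G', ‖T i w‖ ≤ b i * ‖w‖)
    (hG : ∀ i, ∀ v ∈ G, ‖T i v‖ ≤ b i * ‖v‖) :
    G ≤ G' := by
  intro v hv
  have hv_sup : v ∈ E ⊔ G' := hcodisj.eq_top ▸ Submodule.mem_top
  obtain ⟨u, hu, w, hw, rfl⟩ := Submodule.mem_sup.mp hv_sup
  have hbound : ∀ i, ‖u‖ ≤ b i * (‖u + w‖ + ‖w‖) := fun i =>
    calc ‖u‖ ≤ ‖T i u‖ := hE i u hu
      _ = ‖T i (u + w) - T i w‖ := by rw [map_add, add_sub_cancel_right]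
      _ ≤ ‖T i (u + w)‖ + ‖T i w‖ := norm_sub_le _ _
      _ ≤ b i * ‖u + w‖ + b i * ‖w‖ := add_le_add (hG i _ hv) (hG' i w hw)
      _ = b i * (‖u + w‖ + ‖w‖) := by ring
  have hlim : Tendsto (fun i => b i * (‖u + w‖ + ‖w‖)) l (𝓝 0) := by
    simpa using hb.mul_const (‖u + w‖ + ‖w‖)
  have hu0 : u = 0 := norm_le_zero_iff.mp (ge_of_tendsto' hlim hbound)
  simpa [hu0] using hw

theorem Real.tendsto_exp_neg_mul_natCast_div_two {c : ℝ} (hc : 0 < c) :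
    Tendsto (fun n : ℕ => Real.exp (-c * n / 2)) atTop (𝓝 0) := by
  have hlin : Tendsto (fun n : ℕ => c / 2 * n) atTop atTop :=
    tendsto_natCast_atTop_atTop.const_mul_atTop (by positivity)
  convert Real.tendsto_exp_neg_atTop_nhds_zero.comp hlin using 2 with n
  simp only [Function.comp_apply]
  ring_nf

/-- Uniqueness of the backward-contracted subspace: if `E` and `G'` are complementary
subspaces of a normed space `V`, each `T n` expands `E` at rate `λ^{-n}` and contracts
`G'` at rate `e^{-cn/2}`, then any subspace `G` contracted by every `T n` at rate
`e^{-cn/2}` must be contained in `G'`. -/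
theorem contracted_subspace_unique
    {V : Type*} [NormedAddCommGroup V] [NormedSpace ℝ V]
    (E G' G : Submodule ℝ V) (hcompl : IsCompl E G')
    (lam c : ℝ) (hlam : lam ∈ Set.Ioo (0 : ℝ) 1) (hc : 0 < c)
    (T : ℕ → V →ₗ[ℝ] V)
    (hE : ∀ n : ℕ, ∀ u ∈ E, (lam ^ n)⁻¹ * ‖u‖ ≤ ‖T n u‖)
    (hG' : ∀ n : ℕ, ∀ w ∈ G', ‖T n w‖ ≤ Real.exp (-c * n / 2) * ‖w‖)
    (hG : ∀ n : ℕ, ∀ v ∈ G, ‖T n v‖ ≤ Real.exp (-c * n / 2) * ‖v‖) :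
    G ≤ G' := by
  refine Submodule.le_of_codisjoint_of_tendsto_zero hcompl.codisjoint T
    (Real.tendsto_exp_neg_mul_natCast_div_two hc) (fun n u hu => ?_) hG' hG
  have hexpand : 1 ≤ (lam ^ n)⁻¹ :=
    (one_le_inv₀ (pow_pos hlam.1 n)).mpr (pow_le_one₀ hlam.1.le hlam.2.le)
  exact (le_mul_of_one_le_left (norm_nonneg u) hexpand).trans (hE n u hu)
end

section
/- Let V be a finite-dimensional real normed vector space with algebraically complementary subspaces E and F, where E ≠ {0}, and let T : V → V be an invertible linear map. For every c > 0 there exists a > 0 such that every nonzero vector v = u + w with u ∈ E, w ∈ F and ‖w‖ ≤ a·‖u‖ satisfies ‖v‖/‖T v‖ ≤ e^c · sup{ ‖u′‖/‖T u′‖ : u′ ∈ E, u′ ≠ 0 }. -/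
/-- For an invertible linear map `T` of a finite-dimensional normed space with
complementary subspaces `E ≠ 0` and `F`, and any `c > 0`, one can choose the width
`a > 0` of the cone around `E` so small that the inverse-norm of `T` restricted to the
cone exceeds its restriction to `E` by a factor at most `e^c`: for every nonzero
`v = u + w` with `u ∈ E`, `w ∈ F`, `‖w‖ ≤ a‖u‖`,
`‖v‖/‖T v‖ ≤ e^c · sup{‖u'‖/‖T u'‖ : 0 ≠ u' ∈ E}`. -/
theorem cone_inverse_norm_close_to_subspace
    {V : Type*} [NormedAddCommGroup V] [NormedSpace ℝ V] [FiniteDimensional ℝ V]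
    (E F : Submodule ℝ V) (hEF : IsCompl E F) (hE : E ≠ ⊥)
    (T : V ≃ₗ[ℝ] V) (c : ℝ) (hc : 0 < c) :
    ∃ a > (0 : ℝ), ∀ u ∈ E, ∀ w ∈ F, u + w ≠ 0 → ‖w‖ ≤ a * ‖u‖ →
      ‖u + w‖ / ‖T (u + w)‖ ≤
        Real.exp c * sSup {r : ℝ | ∃ u' ∈ E, u' ≠ 0 ∧ r = ‖u'‖ / ‖T u'‖} := by
  set S : Set ℝ := {r : ℝ | ∃ u' ∈ E, u' ≠ 0 ∧ r = ‖u'‖ / ‖T u'‖} with hS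
  set T' : V ≃L[ℝ] V := T.toContinuousLinearEquiv with hT'
  have hTeq : ∀ x : V, T' x = T x := fun x => rfl
  -- bounded above
  have hbdd : BddAbove S := by
    refine ⟨‖(T'.symm : V →L[ℝ] V)‖, ?_⟩
    rintro r ⟨u', _, hu0, rfl⟩
    have hTu0 : T u' ≠ 0 := fun h => hu0 (by simpa using T.injective (by simpa using h))
    have hTu : (0:ℝ) < ‖T u'‖ := norm_pos_iff.mpr hTu0
    rw [div_le_iff₀ hTu]
    have h0 := (T'.symm : V →L[ℝ] V).le_opNorm (T' u')
    rw [show ((T'.symm : V →L[ℝ] V) (T' u')) = u' from T'.symm_apply_apply u'] at h0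
    exact h0
  -- nonempty
  obtain ⟨u₀, hu₀E, hu₀⟩ := Submodule.exists_mem_ne_zero_of_ne_bot hE
  have hne : S.Nonempty := ⟨‖u₀‖ / ‖T u₀‖, u₀, hu₀E, hu₀, rfl⟩
  set M := sSup S with hM
  have hMpos : 0 < M := by
    have hTu0 : T u₀ ≠ 0 := fun h => hu₀ (by simpa using T.injective (by simpa using h))
    have h1 : (0:ℝ) < ‖u₀‖ / ‖T u₀‖ :=
      div_pos (norm_pos_iff.mpr hu₀) (norm_pos_iff.mpr hTu0)
    exact lt_of_lt_of_le h1 (le_csSup hbdd ⟨u₀, hu₀E, hu₀, rfl⟩)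
  set N := ‖(T' : V →L[ℝ] V)‖ with hN
  have hNnn : 0 ≤ N := norm_nonneg _
  have hec : 1 < Real.exp c := by
    have := Real.add_one_le_exp c; linarith
  set a : ℝ := (Real.exp c - 1) / (2 * (1 + Real.exp c * M * N)) with ha
  have hden : 0 < 2 * (1 + Real.exp c * M * N) := by positivity
  have hapos : 0 < a := div_pos (by linarith) hden
  have hkey : a * (1 + Real.exp c * M * N) ≤ (Real.exp c - 1) / 2 := by
    rw [ha, div_mul_eq_mul_div, div_le_div_iff₀ hden (by norm_num)]
    ring_nf
    nlinarith [mul_pos hMpos (lt_of_lt_of_le hapos le_rfl)]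
  refine ⟨a, hapos, ?_⟩
  intro u huE w hwF hv hwa
  have hu0 : u ≠ 0 := by
    rintro rfl
    simp only [norm_zero, mul_zero] at hwa
    have : w = 0 := norm_le_zero_iff.mp hwa
    exact hv (by simp [this])
  have hupos : (0:ℝ) < ‖u‖ := norm_pos_iff.mpr hu0
  have hTu0 : T u ≠ 0 := fun h => hu0 (by simpa using T.injective (by simpa using h))
  have hTupos : (0:ℝ) < ‖T u‖ := norm_pos_iff.mpr hTu0
  have hTv0 : T (u + w) ≠ 0 := fun h => hv (by simpa using T.injective (by simpa using h))
  have hTvpos : (0:ℝ) < ‖T (u + w)‖ := norm_pos_iff.mpr hTv0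
  -- ‖u‖ ≤ M ‖T u‖
  have huM : ‖u‖ ≤ M * ‖T u‖ := by
    have : ‖u‖ / ‖T u‖ ≤ M := le_csSup hbdd ⟨u, huE, hu0, rfl⟩
    exact (div_le_iff₀ hTupos).mp this
  -- ‖T w‖ ≤ N ‖w‖
  have hTw : ‖T w‖ ≤ N * ‖w‖ := by
    have := (T' : V →L[ℝ] V).le_opNorm w
    simpa [hTeq] using this
  -- ‖T u‖ ≤ ‖T (u+w)‖ + ‖T w‖
  have hTlow : ‖T u‖ ≤ ‖T (u + w)‖ + ‖T w‖ := by
    have : T u = T (u + w) - T w := by simp [map_add]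
    rw [this]
    exact norm_sub_le _ _
  have hvub : ‖u + w‖ ≤ ‖u‖ + ‖w‖ := norm_add_le _ _
  rw [div_le_iff₀ hTvpos]
  -- goal : ‖u + w‖ ≤ e^c * M * ‖T (u+w)‖
  have hMNa : M * N * a < 1 := by
    nlinarith [hkey, mul_pos hMpos hTupos]
  -- ‖T(u+w)‖ ≥ (1 - M N a) ‖u‖ / M
  have h2 : ‖u‖ * (1 - M * N * a) ≤ M * ‖T (u + w)‖ := by
    nlinarith [hTw, hTlow, huM, mul_le_mul_of_nonneg_left hwa hNnn,
      mul_le_mul_of_nonneg_left hwa hMpos.le]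
  nlinarith [h2, hvub, hwa, hkey, mul_pos hupos hapos, hupos,
    mul_le_mul_of_nonneg_right hkey hupos.le, hec]
end

section
/- Let X be a compact metric space, let m be a Borel measure on X that is positive on every nonempty open set, and let f : X → X be a continuous map such that m(f^{−1}(A)) = 0 whenever A is a Borel set with m(A) = 0. Assume f is topologically transitive, i.e. for all nonempty open sets U, V ⊆ X there exists n ≥ 0 with f^n(U) ∩ V ≠ ∅. Let μ₁ and μ₂ be Borel probability measures on X and suppose there are nonempty open sets V₁, V₂ ⊆ X with m(V₁ \ B(μ₁)) = 0 and m(V₂ \ B(μ₂)) = 0, where B(μ_i) denotes the basin of μ_i. Then μ₁ = μ₂. -/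
open Filter MeasureTheory Topology

/-!
Transitivity gives `n` such that `U = V₁ ∩ f^[n] ⁻¹' V₂` is a nonempty open set, so `m U > 0`.
Since `f` is nonsingular, almost every point of `U` lies in the basin of `μ₁` and is sent by
`f^[n]` into the basin of `μ₂`. Basins are invariant under `f` (on a compact space Birkhoff
averages along the orbits of `x` and `f x` differ by `O(1/n)`), so some point lies in both
basins, and then `μ₁` and `μ₂` have the same integral against every continuous function.
-/

/-- The basin of a Borel probability measure `μ` for a map `f`: the set of points whose
Birkhoff averages of every continuous function converge to the corresponding
`μ`-integral. -/
def birkhoffBasin {X : Type*} [TopologicalSpace X] [MeasurableSpace X]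
    (f : X → X) (μ : Measure X) : Set X :=
  {x | ∀ φ : C(X, ℝ),
    Tendsto (fun n : ℕ => (1 / (n : ℝ)) * ∑ j ∈ Finset.range n, φ (f^[j] x)) atTop
      (𝓝 (∫ y, φ y ∂μ))}

theorem Measurable.quasiMeasurePreserving_of_preimage_null {α β : Type*} [MeasurableSpace α]
    [MeasurableSpace β] {f : α → β} {μ : Measure α} {ν : Measure β} (hf : Measurable f)
    (h : ∀ s, MeasurableSet s → ν s = 0 → μ (f ⁻¹' s) = 0) :
    Measure.QuasiMeasurePreserving f μ ν :=
  ⟨hf, Measure.AbsolutelyContinuous.mk fun s hs hs0 => by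
    rw [Measure.map_apply hf hs]
    exact h s hs hs0⟩

section Basin

variable {X : Type*} [TopologicalSpace X] [MeasurableSpace X] {f : X → X} {μ : Measure X}
  {x : X}

theorem mem_birkhoffBasin_iff :
    x ∈ birkhoffBasin f μ ↔
      ∀ φ : C(X, ℝ),
        Tendsto (fun n => birkhoffAverage ℝ f φ n x) atTop (𝓝 (∫ y, φ y ∂μ)) := by
  simp only [birkhoffBasin, birkhoffAverage, birkhoffSum, one_div, smul_eq_mul, Set.mem_ofPred_eq]

theorem apply_mem_birkhoffBasin_iff [CompactSpace X] :
    f x ∈ birkhoffBasin f μ ↔ x ∈ birkhoffBasin f μ := by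
  simp only [mem_birkhoffBasin_iff]
  refine forall_congr' fun φ => tendsto_iff_of_dist ?_
  simpa only [dist_eq_norm] using tendsto_zero_iff_norm_tendsto_zero.1 <|
    tendsto_birkhoffAverage_apply_sub_birkhoffAverage' ℝ
      (isCompact_range φ.continuous).isBounded f x

theorem iterate_mem_birkhoffBasin_iff [CompactSpace X] (n : ℕ) :
    f^[n] x ∈ birkhoffBasin f μ ↔ x ∈ birkhoffBasin f μ := by
  induction n with
  | zero => rfl
  | succ n ih => rw [Function.iterate_succ_apply', apply_mem_birkhoffBasin_iff, ih]

theorem eq_of_mem_birkhoffBasin [HasOuterApproxClosed X] [BorelSpace X] {ν : Measure X}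
    [IsFiniteMeasure μ] [IsFiniteMeasure ν] (hμ : x ∈ birkhoffBasin f μ)
    (hν : x ∈ birkhoffBasin f ν) : μ = ν :=
  ext_of_forall_integral_eq_of_IsFiniteMeasure fun φ =>
    tendsto_nhds_unique (hμ φ.toContinuousMap) (hν φ.toContinuousMap)

end Basin

/-- Uniqueness of SRB measures for transitive maps: if `m` is positive on nonempty open
sets, `f` is continuous, nonsingular with respect to `m`, and topologically transitive,
and the basins of `μ₁` and `μ₂` contain nonempty open sets modulo `m`-null sets,
then `μ₁ = μ₂`. -/
theorem unique_srb_of_transitive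
    {X : Type*} [MetricSpace X] [CompactSpace X] [MeasurableSpace X] [BorelSpace X]
    (m : Measure X)
    (hm : ∀ U : Set X, IsOpen U → U.Nonempty → 0 < m U)
    (f : X → X) (hf : Continuous f)
    (hns : ∀ A : Set X, MeasurableSet A → m A = 0 → m (f ⁻¹' A) = 0)
    (htrans : ∀ U V : Set X, IsOpen U → IsOpen V → U.Nonempty → V.Nonempty →
      ∃ n : ℕ, ((f^[n]) '' U ∩ V).Nonempty)
    (μ₁ μ₂ : Measure X) [IsProbabilityMeasure μ₁] [IsProbabilityMeasure μ₂]
    (V₁ V₂ : Set X) (hV₁ : IsOpen V₁) (hV₂ : IsOpen V₂)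
    (hV₁ne : V₁.Nonempty) (hV₂ne : V₂.Nonempty)
    (h₁ : m (V₁ \ birkhoffBasin f μ₁) = 0)
    (h₂ : m (V₂ \ birkhoffBasin f μ₂) = 0) :
    μ₁ = μ₂ := by
  have : m.IsOpenPosMeasure := ⟨fun U hU hne => (hm U hU hne).ne'⟩
  have hqmp : Measure.QuasiMeasurePreserving f m m :=
    hf.measurable.quasiMeasurePreserving_of_preimage_null hns
  obtain ⟨n, hn⟩ := htrans V₁ V₂ hV₁ hV₂ hV₁ne hV₂ne
  have hU : IsOpen (V₁ ∩ f^[n] ⁻¹' V₂) := hV₁.inter (hV₂.preimage (hf.iterate n))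
  have hae : ∀ᵐ x ∂m, (x ∈ V₁ → x ∈ birkhoffBasin f μ₁) ∧
      (x ∈ f^[n] ⁻¹' V₂ → x ∈ f^[n] ⁻¹' birkhoffBasin f μ₂) :=
    (ae_le_set.2 h₁).and ((hqmp.iterate n).preimage_mono_ae (ae_le_set.2 h₂))
  obtain ⟨x, ⟨hx₁, hx₂⟩, hB₁, hB₂⟩ :=
    (Measure.dense_of_ae hae).inter_open_nonempty _ hU (Set.image_inter_nonempty_iff.1 hn)
  exact eq_of_mem_birkhoffBasin ((iterate_mem_birkhoffBasin_iff n).2 (hB₁ hx₁)) (hB₂ hx₂)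
end

section
/- Let Z be a compact metric space, T : Z → Z a homeomorphism, and x, y ∈ Z points with dist(T^{−n}(x), T^{−n}(y)) → 0 as n → ∞. Assume that for every continuous φ : Z → ℝ both limits lim_{n→∞} (1/n)·∑_{j=0}^{n−1} φ(T^j(x)) and lim_{n→∞} (1/n)·∑_{j=0}^{n−1} φ(T^{−j}(x)) exist and are equal, and similarly both limits exist and are equal at y. Then for every continuous φ : Z → ℝ, lim_{n→∞} (1/n)·∑_{j=0}^{n−1} φ(T^j(x)) = lim_{n→∞} (1/n)·∑_{j=0}^{n−1} φ(T^j(y)). -/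
open Filter Topology

/-- Hopf-type argument on the natural extension: if `T` is a homeomorphism of a compact
metric space, the backward orbits of `x` and `y` approach each other, and at both `x`
and `y` the forward and backward Birkhoff averages of every continuous function exist
and coincide, then the forward Birkhoff limits at `x` and `y` coincide. -/
theorem hopf_argument_forward_limits_agree
    {Z : Type*} [MetricSpace Z] [CompactSpace Z]
    (T : Z ≃ₜ Z) (x y : Z)
    (hxy : Tendsto (fun n : ℕ => dist ((⇑T.symm)^[n] x) ((⇑T.symm)^[n] y)) atTop (𝓝 0))
    (hx : ∀ φ : C(Z, ℝ), ∃ L : ℝ,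
      Tendsto (fun n : ℕ => (1 / (n : ℝ)) * ∑ j ∈ Finset.range n, φ ((⇑T)^[j] x)) atTop
        (𝓝 L) ∧
      Tendsto (fun n : ℕ => (1 / (n : ℝ)) * ∑ j ∈ Finset.range n, φ ((⇑T.symm)^[j] x))
        atTop (𝓝 L))
    (hy : ∀ φ : C(Z, ℝ), ∃ L : ℝ,
      Tendsto (fun n : ℕ => (1 / (n : ℝ)) * ∑ j ∈ Finset.range n, φ ((⇑T)^[j] y)) atTop
        (𝓝 L) ∧
      Tendsto (fun n : ℕ => (1 / (n : ℝ)) * ∑ j ∈ Finset.range n, φ ((⇑T.symm)^[j] y))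
        atTop (𝓝 L)) :
    ∀ φ : C(Z, ℝ), ∀ Lx Ly : ℝ,
      Tendsto (fun n : ℕ => (1 / (n : ℝ)) * ∑ j ∈ Finset.range n, φ ((⇑T)^[j] x)) atTop
        (𝓝 Lx) →
      Tendsto (fun n : ℕ => (1 / (n : ℝ)) * ∑ j ∈ Finset.range n, φ ((⇑T)^[j] y)) atTop
        (𝓝 Ly) →
      Lx = Ly := by
  intro φ Lx Ly hLx hLy
  obtain ⟨Lx', hxf, hxb⟩ := hx φ
  obtain ⟨Ly', hyf, hyb⟩ := hy φ
  have hx0 : Lx = Lx' := tendsto_nhds_unique hLx hxf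
  have hy0 : Ly = Ly' := tendsto_nhds_unique hLy hyf
  -- the pointwise difference along backward orbits tends to 0
  have huc : UniformContinuous φ := CompactSpace.uniformContinuous_of_continuous φ.continuous
  have hdiff : Tendsto (fun n : ℕ =>
      φ ((⇑T.symm)^[n] x) - φ ((⇑T.symm)^[n] y)) atTop (𝓝 0) := by
    rw [Metric.tendsto_atTop] at hxy ⊢
    intro ε hε
    rcases Metric.uniformContinuous_iff.1 huc ε hε with ⟨δ, hδ, hδ'⟩
    rcases hxy δ hδ with ⟨N, hN⟩
    refine ⟨N, fun n hn => ?_⟩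
    have := hδ' (show dist ((⇑T.symm)^[n] x) ((⇑T.symm)^[n] y) < δ by
      have := hN n hn
      rwa [Real.dist_eq, sub_zero, abs_of_nonneg dist_nonneg] at this)
    simpa [Real.dist_eq] using this
  have hces := hdiff.cesaro
  -- rewrite Cesàro average as difference of the two backward averages
  have hsub : Tendsto (fun n : ℕ =>
      (1 / (n : ℝ)) * ∑ j ∈ Finset.range n, φ ((⇑T.symm)^[j] x)
      - (1 / (n : ℝ)) * ∑ j ∈ Finset.range n, φ ((⇑T.symm)^[j] y)) atTop (𝓝 0) := by
    refine hces.congr fun n => ?_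
    rw [one_div, ← mul_sub, Finset.sum_sub_distrib]
  have := tendsto_nhds_unique (hxb.sub hyb) hsub
  have : Lx' = Ly' := by linarith
  rw [hx0, hy0, this]
end
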